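/- arXiv:2410.04612 — 3 statements merged into one kernel-verified Lean document; each statement's English description precedes it below -/
import Mathlib

section
/- In a finite-horizon MDP with horizon H, for any two policies π' and π, the difference in expected total reward satisfies J(π') − J(π) = Σ_{h=1}^H E_{s_h ∼ d^{π'}_h, y_h ∼ π'(·|s_h)}[A^π_h(s_h, y_h)], where A^π_h is the advantage function of π (performance difference lemma). -/
open Finset

/-- Performance difference lemma in a finite-horizon MDP with horizon `H`:
`J(π') − J(π) = Σ_{h=1}^H E_{s ∼ d^{π'}_h, y ∼ π'(·|s)}[A^π_h(s,y)]`
where `A^π_h(s,y) = Q^π_h(s,y) − V^π_h(s)`. -/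
theorem performance_difference_lemma
    {S Y : Type*} [Fintype S] [Fintype Y] (H : ℕ)
    (ρ : S → ℝ) (P : S → Y → S → ℝ) (r : S → Y → ℝ)
    (hρ0 : ∀ s, 0 ≤ ρ s) (hρ1 : ∑ s, ρ s = 1)
    (hP0 : ∀ s y s', 0 ≤ P s y s') (hP1 : ∀ s y, ∑ s', P s y s' = 1)
    (π π' : S → Y → ℝ)
    (hπ0 : ∀ s y, 0 ≤ π s y) (hπ1 : ∀ s, ∑ y, π s y = 1)
    (hπ'0 : ∀ s y, 0 ≤ π' s y) (hπ'1 : ∀ s, ∑ y, π' s y = 1)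
    -- value functions of π
    (V : ℕ → S → ℝ) (Q : ℕ → S → Y → ℝ)
    (hV : ∀ h s, V h s = ∑ y, π s y * Q h s y)
    (hQ : ∀ h s y, Q h s y = r s y + ∑ s', P s y s' * V (h + 1) s')
    (hVend : ∀ s, V (H + 1) s = 0)
    -- value functions of π'
    (V' : ℕ → S → ℝ) (Q' : ℕ → S → Y → ℝ)
    (hV' : ∀ h s, V' h s = ∑ y, π' s y * Q' h s y)
    (hQ' : ∀ h s y, Q' h s y = r s y + ∑ s', P s y s' * V' (h + 1) s')
    (hV'end : ∀ s, V' (H + 1) s = 0)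
    -- state distributions induced by π'
    (d' : ℕ → S → ℝ)
    (hd1 : ∀ s, d' 1 s = ρ s)
    (hdstep : ∀ h s', d' (h + 1) s' = ∑ s, ∑ y, d' h s * π' s y * P s y s') :
    (∑ s, ρ s * V' 1 s) - (∑ s, ρ s * V 1 s) =
      ∑ h ∈ Finset.Icc 1 H, ∑ s, d' h s * ∑ y, π' s y * (Q h s y - V h s) := by
  set g : ℕ → ℝ := fun h => ∑ s, d' h s * (V' h s - V h s) with hg
  -- key step identity
  have key : ∀ h, ∑ s, d' h s * ∑ y, π' s y * (Q h s y - V h s) = g h - g (h + 1) := by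
    intro h
    have hpt : ∀ s, ∑ y, π' s y * (Q h s y - V h s)
        = (V' h s - V h s) - ∑ y, π' s y * ∑ s', P s y s' * (V' (h + 1) s' - V (h + 1) s') := by
      intro s
      have e1 : ∑ y, π' s y * (Q h s y - V h s)
          = (∑ y, π' s y * Q h s y) - V h s := by
        simp only [mul_sub, Finset.sum_sub_distrib, ← Finset.sum_mul, hπ'1, one_mul]
      rw [e1, hV' h s]
      simp only [hQ, hQ', mul_add, Finset.sum_add_distrib, mul_sub, Finset.sum_sub_distrib]
      ring
    calc ∑ s, d' h s * ∑ y, π' s y * (Q h s y - V h s)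
        = ∑ s, d' h s * ((V' h s - V h s)
            - ∑ y, π' s y * ∑ s', P s y s' * (V' (h + 1) s' - V (h + 1) s')) := by
          exact Finset.sum_congr rfl fun s _ => by rw [hpt s]
      _ = (∑ s, d' h s * (V' h s - V h s))
            - ∑ s, ∑ y, ∑ s', d' h s * (π' s y * (P s y s' * (V' (h + 1) s' - V (h + 1) s'))) := by
          rw [← Finset.sum_sub_distrib]
          refine Finset.sum_congr rfl fun s _ => ?_
          rw [mul_sub]
          congr 1
          rw [Finset.mul_sum]
          exact Finset.sum_congr rfl fun y _ => by rw [Finset.mul_sum, Finset.mul_sum]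
      _ = g h - g (h + 1) := by
          congr 1
          have swap : ∑ s, ∑ y, ∑ s', d' h s * (π' s y * (P s y s' * (V' (h + 1) s' - V (h + 1) s')))
              = ∑ s', ∑ s, ∑ y, d' h s * (π' s y * (P s y s' * (V' (h + 1) s' - V (h + 1) s'))) := by
            calc ∑ s, ∑ y, ∑ s', d' h s * (π' s y * (P s y s' * (V' (h + 1) s' - V (h + 1) s')))
                = ∑ s, ∑ s', ∑ y, d' h s * (π' s y * (P s y s' * (V' (h + 1) s' - V (h + 1) s'))) :=
                  Finset.sum_congr rfl fun s _ => Finset.sum_comm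
              _ = ∑ s', ∑ s, ∑ y, d' h s * (π' s y * (P s y s' * (V' (h + 1) s' - V (h + 1) s'))) :=
                  Finset.sum_comm
          rw [swap, hg]
          refine Finset.sum_congr rfl fun s' _ => ?_
          rw [hdstep h s', Finset.sum_mul]
          refine Finset.sum_congr rfl fun s _ => ?_
          rw [Finset.sum_mul]
          exact Finset.sum_congr rfl fun y _ => by ring
  -- telescoping
  have tel : ∀ N : ℕ, ∑ h ∈ Finset.Icc 1 N, (g h - g (h + 1)) = g 1 - g (N + 1) := by
    intro N
    induction N with
    | zero => simp
    | succ n ih =>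
        rw [Finset.sum_Icc_succ_top (by omega : 1 ≤ n + 1), ih]
        ring
  have gend : g (H + 1) = 0 := by
    simp [hg, hVend, hV'end]
  have g1 : g 1 = (∑ s, ρ s * V' 1 s) - (∑ s, ρ s * V 1 s) := by
    simp [hg, hd1, mul_sub, Finset.sum_sub_distrib]
  calc (∑ s, ρ s * V' 1 s) - (∑ s, ρ s * V 1 s)
      = g 1 - g (H + 1) := by rw [g1, gend]; ring
    _ = ∑ h ∈ Finset.Icc 1 H, (g h - g (h + 1)) := (tel H).symm
    _ = ∑ h ∈ Finset.Icc 1 H, ∑ s, d' h s * ∑ y, π' s y * (Q h s y - V h s) :=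
        Finset.sum_congr rfl fun h _ => (key h).symm
end

section
/- Let Π be the log-linear policy class induced by feature map φ: S×Y → ℝ^d, i.e., π_θ(y|s) ∝ exp(θᵀφ(s,y)). If for every π ∈ Π, min_{w∈ℝ^d} E_{h, s_h∼d^π_h, y_h∼π}[(Q^π_h(s_h,y_h) − wᵀφ(s_h,y_h))²] ≤ ε, then the approximate policy completeness (APC) condition holds with ε_Π ≤ ε: for every π ∈ Π there exist π' ∈ Π and a positive function C: S → ℝ⁺ such that E_{h, s_h∼d^π_h, y_h∼π}[((1/η) ln π'(y_h|s_h) − (1/η) ln(π(y_h|s_h) exp(η Q^π_h(s_h,y_h))/C(s_h)))²] ≤ ε. -/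
open Finset

/-- If, for a log-linear policy `π`, some linear function of the features fits the
Q-function up to error `ε` on average, then the approximate policy completeness (APC)
condition holds for `π` with error at most `ε`. -/
theorem apc_from_linear_q_error
    {S Y : Type*} [Fintype S] [Fintype Y] {dfeat : ℕ}
    (φ : S → Y → Fin dfeat → ℝ) (H : ℕ) (η : ℝ) (hη : 0 < η)
    (d : ℕ → S → ℝ) (hd0 : ∀ h s, 0 ≤ d h s) (hd1 : ∀ h, ∑ s, d h s = 1)
    (Q : ℕ → S → Y → ℝ) (ε : ℝ)
    (Pol : Set (S → Y → ℝ))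
    (hPol : Pol = {p | ∃ θ : Fin dfeat → ℝ, ∀ s y,
      p s y = Real.exp (∑ i, θ i * φ s y i) / ∑ y', Real.exp (∑ i, θ i * φ s y' i)})
    (π : S → Y → ℝ) (hπPol : π ∈ Pol)
    (hfit : ∃ w : Fin dfeat → ℝ,
      (1 / (H : ℝ)) * ∑ h ∈ Finset.Icc 1 H, ∑ s, d h s * ∑ y, π s y *
        (Q h s y - ∑ i, w i * φ s y i) ^ 2 ≤ ε) :
    ∃ π' ∈ Pol, ∃ Cf : S → ℝ, (∀ s, 0 < Cf s) ∧
      (1 / (H : ℝ)) * ∑ h ∈ Finset.Icc 1 H, ∑ s, d h s * ∑ y, π s y *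
        ((1 / η) * Real.log (π' s y) -
          (1 / η) * Real.log (π s y * Real.exp (η * Q h s y) / Cf s)) ^ 2 ≤ ε := by
  obtain ⟨w, hw⟩ := hfit
  cases isEmpty_or_nonempty Y with
  | inl hY =>
      refine ⟨π, hπPol, fun _ => 1, fun _ => one_pos, ?_⟩
      simpa using hw
  | inr hY => ?_
  rw [hPol] at hπPol ⊢
  obtain ⟨θ, hθ⟩ := hπPol
  set θ' : Fin dfeat → ℝ := fun i => θ i + η * w i with hθ'
  set Z : S → ℝ := fun s => ∑ y', Real.exp (∑ i, θ i * φ s y' i) with hZ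
  set Z' : S → ℝ := fun s => ∑ y', Real.exp (∑ i, θ' i * φ s y' i) with hZ'
  have hZpos : ∀ s, 0 < Z s := fun s =>
    Finset.sum_pos (fun y _ => Real.exp_pos _) Finset.univ_nonempty
  have hZ'pos : ∀ s, 0 < Z' s := fun s =>
    Finset.sum_pos (fun y _ => Real.exp_pos _) Finset.univ_nonempty
  refine ⟨fun s y => Real.exp (∑ i, θ' i * φ s y i) / Z' s, ⟨θ', fun s y => rfl⟩,
    fun s => Z' s / Z s, fun s => div_pos (hZ'pos s) (hZpos s), ?_⟩
  have key : ∀ h s y,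
      ((1 / η) * Real.log (Real.exp (∑ i, θ' i * φ s y i) / Z' s) -
        (1 / η) * Real.log (π s y * Real.exp (η * Q h s y) / (Z' s / Z s))) ^ 2
      = (Q h s y - ∑ i, w i * φ s y i) ^ 2 := by
    intro h s y
    have hπpos : 0 < π s y := by
      rw [hθ s y]; exact div_pos (Real.exp_pos _) (hZpos s)
    have l1 : Real.log (Real.exp (∑ i, θ' i * φ s y i) / Z' s)
        = (∑ i, θ' i * φ s y i) - Real.log (Z' s) := by
      rw [Real.log_div (Real.exp_ne_zero _) (hZ'pos s).ne', Real.log_exp]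
    have l2 : Real.log (π s y * Real.exp (η * Q h s y) / (Z' s / Z s))
        = (∑ i, θ i * φ s y i) - Real.log (Z s) + η * Q h s y
          - (Real.log (Z' s) - Real.log (Z s)) := by
      rw [Real.log_div (by positivity) (div_pos (hZ'pos s) (hZpos s)).ne',
        Real.log_mul hπpos.ne' (Real.exp_ne_zero _), Real.log_exp,
        Real.log_div (hZ'pos s).ne' (hZpos s).ne', hθ s y,
        Real.log_div (Real.exp_ne_zero _) (hZpos s).ne', Real.log_exp]
    rw [l1, l2]
    have hsum : ∑ i, θ' i * φ s y i
        = (∑ i, θ i * φ s y i) + η * ∑ i, w i * φ s y i := by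
      rw [Finset.mul_sum, ← Finset.sum_add_distrib]
      exact Finset.sum_congr rfl fun i _ => by simp [hθ']; ring
    rw [hsum]
    have : (1 / η) * ((∑ i, θ i * φ s y i) + η * ∑ i, w i * φ s y i - Real.log (Z' s)) -
        (1 / η) * ((∑ i, θ i * φ s y i) - Real.log (Z s) + η * Q h s y
          - (Real.log (Z' s) - Real.log (Z s)))
        = (∑ i, w i * φ s y i) - Q h s y := by
      field_simp
      ring
    rw [this]
    ring
  calc (1 / (H : ℝ)) * ∑ h ∈ Finset.Icc 1 H, ∑ s, d h s * ∑ y, π s y *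
        ((1 / η) * Real.log (Real.exp (∑ i, θ' i * φ s y i) / Z' s) -
          (1 / η) * Real.log (π s y * Real.exp (η * Q h s y) / (Z' s / Z s))) ^ 2
      = (1 / (H : ℝ)) * ∑ h ∈ Finset.Icc 1 H, ∑ s, d h s * ∑ y, π s y *
        (Q h s y - ∑ i, w i * φ s y i) ^ 2 := by
        congr 1
        refine Finset.sum_congr rfl fun h _ => Finset.sum_congr rfl fun s _ => ?_
        congr 1
        exact Finset.sum_congr rfl fun y _ => by rw [key h s y]
    _ ≤ ε := hw
end

section
/- There exists a two-armed bandit instance with a log-linear policy class in ℝ² such that the APC condition holds with ε_Π = 0, yet the best linear approximation of the reward satisfies min_{w∈ℝ²} E_{y∼μ}[(r(y) − wᵀφ(y))²] = 1 for the uniform policy μ. Concretely: with actions y_0, y_1, rewards r(y_0) = r(y_1) = 1, and features φ(y_0) = (1,−1), φ(y_1) = (−1,1), the minimum over w of (1/2)((1 − wᵀφ(y_0))² + (1 − wᵀφ(y_1))²) equals 1. -/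
/-- In the two-armed bandit with constant reward `1` and features
`φ(y₀) = (1,−1)`, `φ(y₁) = (−1,1)`, the best linear approximation error of the
reward under the uniform policy,
`min_w (1/2)((1 − wᵀφ(y₀))² + (1 − wᵀφ(y₁))²)`, equals `1`. -/
theorem two_armed_linear_error_is_one :
    IsLeast {e : ℝ | ∃ w : Fin 2 → ℝ,
      e = (1 / 2) * ((1 - (w 0 * 1 + w 1 * (-1))) ^ 2 +
        (1 - (w 0 * (-1) + w 1 * 1)) ^ 2)} 1 := by
  constructor
  · exact ⟨0, by norm_num⟩
  · rintro e ⟨w, rfl⟩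
    nlinarith [sq_nonneg (w 0 - w 1)]
end
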